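/- The generating function of the energy conservation law of the coupled KdV–mKdV system lies in the kernel of the adjoint linearization: ℓ*(u + (1/2)v², uv − v₂) = (0, 0). -/
import Mathlib


/-!
STATEMENT 18: The generating function of the energy conservation law of the coupled
KdV–mKdV system lies in the kernel of the adjoint linearization:
`ℓ*(u + (1/2)v², uv − v₂) = (0, 0)`.
-/

open MvPolynomial

noncomputable section

/-- The polynomial algebra `R = ℚ[u₀,u₁,…,v₀,v₁,…]`; `X (.inl k)` is `u_k`,
`X (.inr k)` is `v_k`. -/
abbrev MRing : Type := MvPolynomial (ℕ ⊕ ℕ) ℚ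

/-- The jet variable `u_k`. -/
def uu (k : ℕ) : MRing := X (Sum.inl k)

/-- The jet variable `v_k`. -/
def vv (k : ℕ) : MRing := X (Sum.inr k)

/-- The total derivative `D_x`: `D_x(u_k) = u_{k+1}`, `D_x(v_k) = v_{k+1}`. -/
def Dx : Derivation ℚ MRing MRing :=
  mkDerivation ℚ fun i =>
    match i with
    | Sum.inl k => uu (k + 1)
    | Sum.inr k => vv (k + 1)

/-- The right-hand side `f = −u₃ + 6uu₁ − 3vv₃ − 3v₁v₂ + 3u₁v² + 6uvv₁` of the
coupled KdV–mKdV system. -/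
def fRhs : MRing :=
  -uu 3 + 6 * uu 0 * uu 1 - 3 * vv 0 * vv 3 - 3 * vv 1 * vv 2
    + 3 * uu 1 * vv 0 ^ 2 + 6 * uu 0 * vv 0 * vv 1

/-- The right-hand side `g = −v₃ + 3v²v₁ + 3uv₁ + 3u₁v` of the coupled KdV–mKdV system. -/
def gRhs : MRing :=
  -vv 3 + 3 * vv 0 ^ 2 * vv 1 + 3 * uu 0 * vv 1 + 3 * uu 1 * vv 0

/-- The total derivative `D_t`: `D_t(u_k) = D_x^k(f)`, `D_t(v_k) = D_x^k(g)`. -/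
def Dt : Derivation ℚ MRing MRing :=
  mkDerivation ℚ fun i =>
    match i with
    | Sum.inl k => (⇑Dx)^[k] fRhs
    | Sum.inr k => (⇑Dx)^[k] gRhs

/-- The adjoint linearization `ℓ*` of the coupled KdV–mKdV system. -/
def ellStar (φ ψ : MRing) : MRing × MRing :=
  (-Dt φ - Dx (Dx (Dx φ)) + (6 * uu 0 + 3 * vv 0 ^ 2) * Dx φ + 3 * vv 0 * Dx ψ,
   -(3 * vv 0) * Dx (Dx (Dx φ)) - 6 * vv 1 * Dx (Dx φ) + 6 * (uu 0 * vv 0 - vv 2) * Dx φ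
     - Dt ψ - Dx (Dx (Dx ψ)) + 3 * (uu 0 + vv 0 ^ 2) * Dx ψ)

lemma Dx_uu (k : ℕ) : Dx (uu k) = uu (k + 1) := mkDerivation_X ℚ _ _

lemma Dx_vv (k : ℕ) : Dx (vv k) = vv (k + 1) := mkDerivation_X ℚ _ _

lemma Dt_uu (k : ℕ) : Dt (uu k) = (⇑Dx)^[k] fRhs := mkDerivation_X ℚ _ _

lemma Dt_vv (k : ℕ) : Dt (vv k) = (⇑Dx)^[k] gRhs := mkDerivation_X ℚ _ _

lemma Dx_C (a : ℚ) : Dx (C a) = 0 := by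
  have : (C a : MRing) = algebraMap ℚ MRing a := rfl
  rw [this, Derivation.map_algebraMap]

lemma Dt_C (a : ℚ) : Dt (C a) = 0 := by
  have : (C a : MRing) = algebraMap ℚ MRing a := rfl
  rw [this, Derivation.map_algebraMap]

lemma Dx_ofNat (n : ℕ) [n.AtLeastTwo] : Dx (no_index (OfNat.ofNat n) : MRing) = 0 := by
  rw [← Nat.cast_ofNat, Derivation.map_natCast]

lemma Dt_ofNat (n : ℕ) [n.AtLeastTwo] : Dt (no_index (OfNat.ofNat n) : MRing) = 0 := by
  rw [← Nat.cast_ofNat, Derivation.map_natCast]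

/-- The generating function `(u + (1/2)v², uv − v₂)` of the energy conservation law lies
in the kernel of `ℓ*`. -/
theorem kdv_mkdv_generating_function_in_ker :
    ellStar (uu 0 + C (1/2 : ℚ) * vv 0 ^ 2) (uu 0 * vv 0 - vv 2) = (0, 0) := by
  have hC : (C (1/2 : ℚ) : MRing) * 2 = 1 := by
    rw [show (2 : MRing) = C (2 : ℚ) from (map_ofNat C 2).symm, ← C_mul]; norm_num
  simp only [ellStar, fRhs, gRhs, Function.iterate_succ, Function.iterate_zero,
    Function.comp_apply, id_eq, map_add, map_sub, map_neg, Derivation.leibniz,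
    Derivation.leibniz_pow, Dx_uu, Dx_vv, Dt_uu, Dt_vv, Dx_C, Dt_C, Dx_ofNat, Dt_ofNat, Derivation.map_natCast,
    smul_eq_mul, nsmul_eq_mul, Nat.cast_ofNat, pow_one, mul_zero, zero_mul,
    add_zero, zero_add, map_zero, map_one, Prod.mk.injEq]
  generalize h : (C (1/2 : ℚ) : MRing) = c at hC ⊢
  constructor
  · linear_combination ((3 : MRing) * uu 0 * vv 0 * vv 1 + (-3 : MRing) * uu 1 * vv 0 ^ 2
      + (-3 : MRing) * vv 1 * vv 2) * hC
  · linear_combination ((6 : MRing) * uu 0 * vv 0 ^ 2 * vv 1 + (-21 : MRing) * vv 0 * vv 1 * vv 2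
      + (-3 : MRing) * vv 0 ^ 2 * vv 3 + (-6 : MRing) * vv 1 ^ 3) * hC
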